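/- The graded ring ko_* = Z[η,α,β]/(2η, η³, ηα, α² − 4β), with |η|=1, |α|=4, |β|=8, has homotopy groups in degrees 0 through 7 given by: Z, Z/2, Z/2, 0, Z, 0, 0, 0, and the degree-8 component is the free abelian group generated by β. -/

import Mathlib

/- The coefficient ring of real connective K-theory:
   ko_* = ℤ[η,α,β]/(2η, η³, ηα, α² − 4β), |η|=1, |α|=4, |β|=8. -/

noncomputable section
open MvPolynomial

/-- The defining ideal of relations. -/
def koI : Ideal (MvPolynomial (Fin 3) ℤ) :=
  Ideal.span {2 * X 0, (X 0) ^ 3, X 0 * X 1, (X 1) ^ 2 - 4 * X 2}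

/-- The ring ko_* -/
abbrev koR := MvPolynomial (Fin 3) ℤ ⧸ koI

def koEta : koR := Ideal.Quotient.mk koI (X 0)
def koAlpha : koR := Ideal.Quotient.mk koI (X 1)
def koBeta : koR := Ideal.Quotient.mk koI (X 2)

/-- Weights: |η|=1, |α|=4, |β|=8. -/
def koW : Fin 3 → ℕ := ![1, 4, 8]

/-- The degree-`n` homogeneous component of ko_*, as the image in the quotient of the
weighted-homogeneous polynomials of weighted degree `n`. -/
def koDeg (n : ℕ) : Submodule ℤ koR :=
  Submodule.map (Ideal.Quotient.mkₐ ℤ koI).toLinearMap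
    (MvPolynomial.weightedHomogeneousSubmodule ℤ koW n)

/-! The relations η³ = 0 and ηα = 0 kill every monomial η^a α^b β^c except those with a ≤ 2 and
ab = 0. Hence each component of degree at most 8 is zero or cyclic, generated by 1, η, η², α or β
(in degree 8 also α², which equals 4β). The orders of these generators are read off from ring maps
out of ko_*: to ℤ by (η, α, β) ↦ (0, 2, 1), so that 1, α, β have infinite order, and to
𝔽₂[t]/(t³) by η ↦ t, so that η and η² are nonzero and hence of order 2. -/

open Submodule

theorem MvPolynomial.weightedHomogeneousSubmodule_eq_span_monomial {σ R M : Type*}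
    [CommSemiring R] [AddCommMonoid M] (w : σ → M) (m : M) :
    weightedHomogeneousSubmodule R w m =
      span R ((monomial · (1 : R)) '' {d | Finsupp.weight w d = m}) := by
  rw [weightedHomogeneousSubmodule_eq_finsupp_supported]
  exact restrictSupport_eq_span (R := R) _

theorem nonempty_addEquiv_zmod_of_eq_span_singleton {A : Type*} [AddCommGroup A]
    {S : Submodule ℤ A} {a : A} (hS : S = ℤ ∙ a) {n : ℕ} (ha : addOrderOf a = n) :
    Nonempty (S ≃+ ZMod n) := by
  subst hS ha
  exact ⟨(CharacterModule.intSpanEquivQuotAddOrderOf a).toAddEquiv.trans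
    (Int.quotientSpanNatEquivZMod _).toAddEquiv⟩

theorem addOrderOf_eq_zero_of_map_ne_zero {M N : Type*} [AddMonoid M] [AddGroup N]
    [IsAddTorsionFree N] (f : M →+ N) {x : M} (hx : f x ≠ 0) : addOrderOf x = 0 := by
  have hfx : addOrderOf (f x) = 0 :=
    addOrderOf_eq_zero_iff.mpr ((isOfFinAddOrder_iff_eq_zero _).not.mpr hx)
  exact Nat.eq_zero_of_zero_dvd (hfx ▸ addOrderOf_map_dvd f x)

theorem AdjoinRoot.root_X_pow_pow_ne_zero {R : Type*} [CommRing R] [Nontrivial R] {n k : ℕ}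
    (hk : k < n) : root (Polynomial.X ^ n : Polynomial R) ^ k ≠ 0 := by
  rw [← mk_X, ← map_pow, Ne, mk_eq_zero, Polynomial.X_pow_dvd_iff]
  exact fun h => by simpa using h k hk

theorem weight_koW (d : Fin 3 →₀ ℕ) : Finsupp.weight koW d = d 0 + 4 * d 1 + 8 * d 2 := by
  simp [Finsupp.weight_apply, Finsupp.sum_fintype, koW, Fin.sum_univ_three, mul_comm]

theorem mk_monomial_one_koI (d : Fin 3 →₀ ℕ) :
    Ideal.Quotient.mk koI (monomial d 1) = koEta ^ d 0 * koAlpha ^ d 1 * koBeta ^ d 2 := by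
  simp [monomial_eq, Finsupp.prod_fintype, Fin.prod_univ_three, koEta, koAlpha, koBeta]

theorem koDeg_eq_span (n : ℕ) :
    koDeg n = span ℤ
      {x | ∃ a b c, a + 4 * b + 8 * c = n ∧ koEta ^ a * koAlpha ^ b * koBeta ^ c = x} := by
  rw [koDeg, weightedHomogeneousSubmodule_eq_span_monomial, map_span]
  congr 1
  ext x
  constructor
  · rintro ⟨_, ⟨d, hd, rfl⟩, rfl⟩
    exact ⟨d 0, d 1, d 2, by simpa [weight_koW] using hd, (mk_monomial_one_koI d).symm⟩
  · rintro ⟨a, b, c, h, rfl⟩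
    refine ⟨_, ⟨Finsupp.equivFunOnFinite.symm ![a, b, c], ?_, rfl⟩, ?_⟩
    · simpa [weight_koW] using h
    · simpa using mk_monomial_one_koI (Finsupp.equivFunOnFinite.symm ![a, b, c])

theorem koMonomial_mem_koDeg (a b c : ℕ) :
    koEta ^ a * koAlpha ^ b * koBeta ^ c ∈ koDeg (a + 4 * b + 8 * c) := by
  rw [koDeg_eq_span]
  exact subset_span ⟨a, b, c, rfl, rfl⟩

theorem two_mul_koEta : 2 * koEta = 0 := by
  rw [koEta, ← map_ofNat (Ideal.Quotient.mk koI) 2, ← map_mul, Ideal.Quotient.eq_zero_iff_mem]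
  exact Ideal.subset_span (by simp)

theorem koEta_pow_three : koEta ^ 3 = 0 := by
  rw [koEta, ← map_pow, Ideal.Quotient.eq_zero_iff_mem]
  exact Ideal.subset_span (by simp)

theorem koEta_mul_koAlpha : koEta * koAlpha = 0 := by
  rw [koEta, koAlpha, ← map_mul, Ideal.Quotient.eq_zero_iff_mem]
  exact Ideal.subset_span (by simp)

theorem koAlpha_sq : koAlpha ^ 2 = 4 * koBeta := by
  rw [← sub_eq_zero, koAlpha, koBeta, ← map_ofNat (Ideal.Quotient.mk koI) 4, ← map_pow,
    ← map_mul, ← map_sub, Ideal.Quotient.eq_zero_iff_mem]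
  exact Ideal.subset_span (by simp)

theorem koMonomial_eq_zero {a b : ℕ} (h : 3 ≤ a ∨ 1 ≤ a ∧ 1 ≤ b) (c : ℕ) :
    koEta ^ a * koAlpha ^ b * koBeta ^ c = 0 := by
  rcases h with h | ⟨ha, hb⟩
  · obtain ⟨k, rfl⟩ := Nat.exists_eq_add_of_le h
    rw [pow_add, koEta_pow_three]
    ring
  · obtain ⟨k, rfl⟩ := Nat.exists_eq_add_of_le ha
    obtain ⟨l, rfl⟩ := Nat.exists_eq_add_of_le hb
    calc koEta ^ (1 + k) * koAlpha ^ (1 + l) * koBeta ^ c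
        = koEta * koAlpha * (koEta ^ k * koAlpha ^ l * koBeta ^ c) := by ring
      _ = 0 := by rw [koEta_mul_koAlpha, zero_mul]

theorem koDeg_eq_span_singleton {n : ℕ} {g : koR} (hg : g ∈ koDeg n)
    (h : ∀ a b c, a + 4 * b + 8 * c = n → a < 3 → a = 0 ∨ b = 0 →
      koEta ^ a * koAlpha ^ b * koBeta ^ c ∈ ℤ ∙ g) :
    koDeg n = ℤ ∙ g := by
  refine le_antisymm ?_ ((span_singleton_le_iff_mem _ _).mpr hg)
  rw [koDeg_eq_span, span_le]
  rintro _ ⟨a, b, c, habc, rfl⟩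
  by_cases hab : a < 3 ∧ (a = 0 ∨ b = 0)
  · exact h a b c habc hab.1 hab.2
  · rw [koMonomial_eq_zero (by omega)]
    exact zero_mem _

theorem koDeg_eq_span_koMonomial {a₀ b₀ c₀ n : ℕ} (hn : a₀ + 4 * b₀ + 8 * c₀ = n)
    (h : ∀ a b c, a + 4 * b + 8 * c = n → a < 3 → a = 0 ∨ b = 0 → a = a₀ ∧ b = b₀ ∧ c = c₀) :
    koDeg n = ℤ ∙ (koEta ^ a₀ * koAlpha ^ b₀ * koBeta ^ c₀) := by
  refine koDeg_eq_span_singleton (hn ▸ koMonomial_mem_koDeg a₀ b₀ c₀) fun a b c habc ha hab => ?_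
  obtain ⟨rfl, rfl, rfl⟩ := h a b c habc ha hab
  exact mem_span_singleton_self _

theorem koDeg_eq_bot {n : ℕ}
    (h : ∀ a b c, a + 4 * b + 8 * c = n → a < 3 → a = 0 ∨ b = 0 → False) : koDeg n = ⊥ := by
  rw [← span_zero_singleton ℤ]
  exact koDeg_eq_span_singleton (zero_mem _) fun a b c habc ha hab => (h a b c habc ha hab).elim

theorem koDeg_zero : koDeg 0 = ℤ ∙ 1 := by
  simpa using koDeg_eq_span_koMonomial (a₀ := 0) (b₀ := 0) (c₀ := 0) rfl (by omega)

theorem koDeg_one : koDeg 1 = ℤ ∙ koEta := by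
  simpa using koDeg_eq_span_koMonomial (a₀ := 1) (b₀ := 0) (c₀ := 0) rfl (by omega)

theorem koDeg_two : koDeg 2 = ℤ ∙ koEta ^ 2 := by
  simpa using koDeg_eq_span_koMonomial (a₀ := 2) (b₀ := 0) (c₀ := 0) rfl (by omega)

theorem koDeg_four : koDeg 4 = ℤ ∙ koAlpha := by
  simpa using koDeg_eq_span_koMonomial (a₀ := 0) (b₀ := 1) (c₀ := 0) rfl (by omega)

theorem koDeg_eight : koDeg 8 = ℤ ∙ koBeta := by
  refine koDeg_eq_span_singleton (by simpa using koMonomial_mem_koDeg 0 0 1)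
    fun a b c h ha hab => ?_
  obtain ⟨rfl, rfl, rfl⟩ | ⟨rfl, rfl, rfl⟩ :
      (a = 0 ∧ b = 2 ∧ c = 0) ∨ (a = 0 ∧ b = 0 ∧ c = 1) := by
    omega
  · exact mem_span_singleton.mpr ⟨4, by rw [zsmul_eq_mul, koAlpha_sq]; push_cast; ring⟩
  · simp

def koLift {A : Type*} [CommRing A] (t a b : A) (h2 : 2 * t = 0) (h3 : t ^ 3 = 0)
    (hta : t * a = 0) (hab : a ^ 2 = 4 * b) : koR →+* A :=
  Ideal.Quotient.lift koI (aeval ![t, a, b]).toRingHom fun _ hp =>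
    (Ideal.span_le (I := RingHom.ker _)).mpr
      (by simp [Set.insert_subset_iff, h2, h3, hta, hab]) hp

section koLift

variable {A : Type*} [CommRing A] {t a b : A} (h2 : 2 * t = 0) (h3 : t ^ 3 = 0)
  (hta : t * a = 0) (hab : a ^ 2 = 4 * b)

@[simp] theorem koLift_koEta : koLift t a b h2 h3 hta hab koEta = t := by simp [koLift, koEta]

@[simp] theorem koLift_koAlpha : koLift t a b h2 h3 hta hab koAlpha = a := by
  simp [koLift, koAlpha]

@[simp] theorem koLift_koBeta : koLift t a b h2 h3 hta hab koBeta = b := by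
  simp [koLift, koBeta]

end koLift

def koToInt : koR →+* ℤ :=
  koLift 0 2 1 (by norm_num) (by norm_num) (by norm_num) (by norm_num)

def koToTruncatedPolynomial : koR →+* AdjoinRoot (Polynomial.X ^ 3 : Polynomial (ZMod 2)) :=
  koLift (AdjoinRoot.root _) 0 0
    (by rw [← map_ofNat (AdjoinRoot.mk _) 2, CharTwo.two_eq_zero (R := Polynomial (ZMod 2)),
      map_zero, zero_mul])
    (by rw [← AdjoinRoot.mk_X, ← map_pow, AdjoinRoot.mk_self]) (mul_zero _) (by ring)

theorem addOrderOf_koR_one : addOrderOf (1 : koR) = 0 :=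
  addOrderOf_eq_zero_of_map_ne_zero koToInt.toAddMonoidHom (by simp)

theorem addOrderOf_koAlpha : addOrderOf koAlpha = 0 :=
  addOrderOf_eq_zero_of_map_ne_zero koToInt.toAddMonoidHom (by simp [koToInt])

theorem addOrderOf_koBeta : addOrderOf koBeta = 0 :=
  addOrderOf_eq_zero_of_map_ne_zero koToInt.toAddMonoidHom (by simp [koToInt])

theorem addOrderOf_koEta_pow {k : ℕ} (hk0 : 0 < k) (hk : k < 3) :
    addOrderOf (koEta ^ k) = 2 := by
  have : Fact (Nat.Prime 2) := ⟨Nat.prime_two⟩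
  obtain ⟨j, rfl⟩ : ∃ j, k = j + 1 := ⟨k - 1, by omega⟩
  refine addOrderOf_eq_prime ?_ fun h => AdjoinRoot.root_X_pow_pow_ne_zero (R := ZMod 2) hk ?_
  · rw [nsmul_eq_mul, Nat.cast_ofNat, pow_succ', ← mul_assoc, two_mul_koEta, zero_mul]
  · simpa [koToTruncatedPolynomial] using congrArg koToTruncatedPolynomial h

/-- The homotopy of ko in degrees 0–7 is ℤ, ℤ/2, ℤ/2, 0, ℤ, 0, 0, 0, and the degree-8
component is free abelian on β. -/
theorem ko_homotopy_groups :
    Nonempty ((koDeg 0) ≃+ ℤ) ∧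
    Nonempty ((koDeg 1) ≃+ ZMod 2) ∧
    Nonempty ((koDeg 2) ≃+ ZMod 2) ∧
    koDeg 3 = ⊥ ∧
    Nonempty ((koDeg 4) ≃+ ℤ) ∧
    koDeg 5 = ⊥ ∧ koDeg 6 = ⊥ ∧ koDeg 7 = ⊥ ∧
    (koBeta ∈ koDeg 8 ∧ ∀ x ∈ koDeg 8, ∃! n : ℤ, x = n • koBeta) := by
  refine ⟨nonempty_addEquiv_zmod_of_eq_span_singleton koDeg_zero addOrderOf_koR_one,
    nonempty_addEquiv_zmod_of_eq_span_singleton koDeg_one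
      (by simpa using addOrderOf_koEta_pow (k := 1) one_pos (by norm_num)),
    nonempty_addEquiv_zmod_of_eq_span_singleton koDeg_two
      (addOrderOf_koEta_pow two_pos (by norm_num)),
    koDeg_eq_bot (by omega),
    nonempty_addEquiv_zmod_of_eq_span_singleton koDeg_four addOrderOf_koAlpha,
    koDeg_eq_bot (by omega), koDeg_eq_bot (by omega), koDeg_eq_bot (by omega), ?_⟩
  rw [koDeg_eight]
  refine ⟨mem_span_singleton_self koBeta, fun x hx => ?_⟩
  obtain ⟨n, rfl⟩ := mem_span_singleton.mp hx
  have hβ : Function.Injective (· • koBeta : ℤ → koR) :=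
    injective_zsmul_iff_not_isOfFinAddOrder.mpr (addOrderOf_eq_zero_iff.mp addOrderOf_koBeta)
  exact ⟨n, rfl, fun m hm => hβ hm.symm⟩

end
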